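/- Let H be a complex Hilbert space, D ⊆ H a linear subspace, and X_1,…,X_n linear operators mapping D into D, each Hermitian or skew-Hermitian on D, such that for every j ∈ {1,…,n−1} the commutator [X_j, X_n] lies in the linear span of {X_1,…,X_n} (as operators on D). Let m = (m_p) be a sequence of positive reals satisfying (A0), (A1), (A2) and (A3'). Then for u ∈ D: u ∈ S_m(X_1,…,X_n) if and only if u ∈ S_m(X_1,…,X_{n−1}) and u ∈ S_m(X_n). -/

import Mathlib

open scoped ComplexInnerProductSpace

noncomputable section

/-- For a word `α = (i₁, …, i_k)`, `applyWord X α u = X_{i₁} (X_{i₂} ( ⋯ (X_{i_k} u)))`. -/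
def applyWord {E : Type*} [NormedAddCommGroup E] [InnerProductSpace ℂ E] {ι : Type*}
    (X : ι → E →ₗ[ℂ] E) (α : List ι) (u : E) : E :=
  α.foldr (fun i v => X i v) u

/-- `u ∈ S_m(X_1, …, X_N)` for a single sequence `m`. -/
def memGSRsingle {E : Type*} [NormedAddCommGroup E] [InnerProductSpace ℂ E]
    {ι : Type*} [Fintype ι] [DecidableEq ι]
    (m : ℕ → ℝ) (X : ι → E →ₗ[ℂ] E) (u : E) : Prop :=
  ∃ C A : ℝ, 0 < C ∧ 0 < A ∧ ∀ α : List ι, α ≠ [] →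
    ‖applyWord X α u‖ ≤ C * A ^ α.length * ∏ j, m (α.count j)

/-- `u ∈ S_m(Y)` for a single operator `Y`. -/
def memGSRone {E : Type*} [NormedAddCommGroup E] [InnerProductSpace ℂ E]
    (m : ℕ → ℝ) (T : E →ₗ[ℂ] E) (u : E) : Prop :=
  ∃ C A : ℝ, 0 < C ∧ 0 < A ∧ ∀ k : ℕ, ‖(T ^ k) u‖ ≤ C * A ^ k * m k

section Aux

variable {E : Type*} [NormedAddCommGroup E] [InnerProductSpace ℂ E] {ι : Type*}

lemma applyWord_nil (X : ι → E →ₗ[ℂ] E) (u : E) : applyWord X [] u = u := rfl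

lemma applyWord_cons (X : ι → E →ₗ[ℂ] E) (i : ι) (w : List ι) (u : E) :
    applyWord X (i :: w) u = X i (applyWord X w u) := rfl

lemma applyWord_append (X : ι → E →ₗ[ℂ] E) (w₁ w₂ : List ι) (u : E) :
    applyWord X (w₁ ++ w₂) u = applyWord X w₁ (applyWord X w₂ u) :=
  List.foldr_append

lemma applyWord_map {κ : Type*} (X : ι → E →ₗ[ℂ] E) (f : κ → ι) (β : List κ) (u : E) :
    applyWord X (β.map f) u = applyWord (fun j => X (f j)) β u :=
  List.foldr_map

lemma applyWord_replicate (X : ι → E →ₗ[ℂ] E) (i : ι) (k : ℕ) (u : E) :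
    applyWord X (List.replicate k i) u = ((X i) ^ k) u := by
  induction k with
  | zero => rfl
  | succ k ih =>
      rw [List.replicate_succ, applyWord_cons, ih, pow_succ']
      rfl

lemma applyWord_mem (X : ι → E →ₗ[ℂ] E) (D : Submodule ℂ E)
    (hXD : ∀ i, ∀ x ∈ D, X i x ∈ D) (w : List ι) {u : E} (hu : u ∈ D) :
    applyWord X w u ∈ D := by
  induction w with
  | nil => exact hu
  | cons i w ih => exact hXD i _ ih

lemma abs_inner_word (X : ι → E →ₗ[ℂ] E) (D : Submodule ℂ E)
    (hXD : ∀ i, ∀ x ∈ D, X i x ∈ D)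
    (hherm : ∀ i, (∀ u ∈ D, ∀ v ∈ D, ⟪X i u, v⟫ = ⟪u, X i v⟫) ∨
                  (∀ u ∈ D, ∀ v ∈ D, ⟪X i u, v⟫ = -⟪u, X i v⟫))
    (w : List ι) : ∀ x ∈ D, ∀ y ∈ D,
    ‖⟪applyWord X w x, y⟫‖ = ‖⟪x, applyWord X w.reverse y⟫‖ := by
  induction w with
  | nil => intro x hx y hy; simp [applyWord_nil]
  | cons i w ih =>
      intro x hx y hy
      have hz : applyWord X w x ∈ D := applyWord_mem X D hXD w hx
      have h1 : ‖⟪X i (applyWord X w x), y⟫‖ = ‖⟪applyWord X w x, X i y⟫‖ := by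
        rcases hherm i with h | h
        · rw [h _ hz _ hy]
        · rw [h _ hz _ hy, norm_neg]
      rw [applyWord_cons, h1, ih x hx (X i y) (hXD i y hy), List.reverse_cons,
        applyWord_append]
      rfl

lemma norm_inner_list_sum_le {τ : Type*} (u : E) (f : τ → E) (l : List τ) :
    ‖⟪u, (l.map f).sum⟫‖ ≤ (l.map fun t => ‖⟪u, f t⟫‖).sum := by
  induction l with
  | nil => simp
  | cons a l ih =>
      simp only [List.map_cons, List.sum_cons, inner_add_right]
      exact (norm_add_le _ _).trans (by gcongr)

lemma map_sum_list {τ : Type*} (T : E →ₗ[ℂ] E) (f : τ → E) (l : List τ) :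
    T (l.map f).sum = (l.map fun t => T (f t)).sum := by
  induction l with
  | nil => simp
  | cons a l ih => simp [ih]

end Aux

def gsrPush {n : ℕ} (c : Fin n → Fin (n + 1) → ℂ) : List (Fin n) → ℕ → List (ℂ × List (Fin n) × ℕ)
  | [], a => [(1, [], a + 1)]
  | j :: β, a =>
      (gsrPush c β a).map (fun t => (t.1, j :: t.2.1, t.2.2)) ++
        (List.ofFn (fun q : Fin n => (-(c j q.castSucc), q :: β, a)) ++
          (gsrPush c β a).map (fun t => (-(c j (Fin.last n)) * t.1, t.2)))

def gsrNF {n : ℕ} (c : Fin n → Fin (n + 1) → ℂ) : List (Fin (n + 1)) → List (ℂ × List (Fin n) × ℕ)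
  | [] => [(1, [], 0)]
  | i :: w =>
      ((gsrNF c w).map (fun t =>
        if h : i = Fin.last n then (gsrPush c t.2.1 t.2.2).map (fun s => (t.1 * s.1, s.2))
        else [(t.1, i.castPred h :: t.2.1, t.2.2)])).flatten

def gsrLen {n : ℕ} (t : ℂ × List (Fin n) × ℕ) : ℕ := t.2.1.length + t.2.2

def gsrEval {E : Type*} [NormedAddCommGroup E] [InnerProductSpace ℂ E] {n : ℕ}
    (X : Fin (n + 1) → E →ₗ[ℂ] E) (u : E) (t : ℂ × List (Fin n) × ℕ) : E :=
  t.1 • applyWord X (t.2.1.map Fin.castSucc ++ List.replicate t.2.2 (Fin.last n)) u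

lemma gsrPush_len {n : ℕ} (c : Fin n → Fin (n + 1) → ℂ) (β : List (Fin n)) (a : ℕ) :
    ∀ t ∈ gsrPush c β a, gsrLen t ≤ β.length + a + 1 := by
  induction β with
  | nil =>
      intro t ht
      simp only [gsrPush, List.mem_singleton] at ht
      subst ht; simp [gsrLen]
  | cons j β ih =>
      intro t ht
      simp only [gsrPush, List.mem_append, List.mem_map, List.mem_ofFn] at ht
      rcases ht with ⟨s, hs, rfl⟩ | ⟨q, rfl⟩ | ⟨s, hs, rfl⟩
      · have := ih s hs
        simp only [gsrLen, List.length_cons] at *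
        omega
      · simp only [gsrLen, List.length_cons]; omega
      · have := ih s hs
        simp only [gsrLen, List.length_cons] at *
        omega

lemma gsrNF_len {n : ℕ} (c : Fin n → Fin (n + 1) → ℂ) (w : List (Fin (n + 1))) :
    ∀ t ∈ gsrNF c w, gsrLen t ≤ w.length := by
  induction w with
  | nil =>
      intro t ht
      simp only [gsrNF, List.mem_singleton] at ht
      subst ht; simp [gsrLen]
  | cons i w ih =>
      intro t ht
      simp only [gsrNF, List.mem_flatten, List.mem_map] at ht
      obtain ⟨l, ⟨s, hs, rfl⟩, htl⟩ := ht
      by_cases h : i = Fin.last n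
      · rw [dif_pos h] at htl
        simp only [List.mem_map] at htl
        obtain ⟨r, hr, rfl⟩ := htl
        have h1 := gsrPush_len c s.2.1 s.2.2 r hr
        have h2 := ih s hs
        simp only [gsrLen, List.length_cons] at *
        omega
      · rw [dif_neg h] at htl
        simp only [List.mem_singleton] at htl
        subst htl
        have h2 := ih s hs
        simp only [gsrLen, List.length_cons] at *
        omega

section Eval

variable {E : Type*} [NormedAddCommGroup E] [InnerProductSpace ℂ E] {n : ℕ}
variable (X : Fin (n + 1) → E →ₗ[ℂ] E) (D : Submodule ℂ E)
variable (c : Fin n → Fin (n + 1) → ℂ)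

lemma list_map_sum_smul {τ : Type*} (r : ℂ) (f : τ → E) (l : List τ) :
    (l.map (fun t => r • f t)).sum = r • (l.map f).sum := by
  induction l with
  | nil => simp
  | cons a l ih => simp [ih, smul_add]

lemma sum_map_flatten_map {τ σ : Type*} (F : τ → List σ) (ev : σ → E) (l : List τ) :
    (((l.map F).flatten).map ev).sum = (l.map (fun t => ((F t).map ev).sum)).sum := by
  induction l with
  | nil => simp
  | cons a l ih =>
      simp only [List.map_cons, List.flatten_cons, List.map_append, List.sum_append,
        List.sum_cons, ih]

lemma gsrPush_eval
    (hXD : ∀ i, ∀ x ∈ D, X i x ∈ D)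
    (hc : ∀ j : Fin n, ∀ x ∈ D,
      X (Fin.last n) (X j.castSucc x) = X j.castSucc (X (Fin.last n) x) - ∑ p, c j p • X p x)
    {u : E} (hu : u ∈ D) (β : List (Fin n)) (a : ℕ) :
    X (Fin.last n) (applyWord X (β.map Fin.castSucc ++ List.replicate a (Fin.last n)) u) =
      ((gsrPush c β a).map (gsrEval X u)).sum := by
  induction β with
  | nil =>
      simp only [List.map_nil, List.nil_append, gsrPush, List.map_cons, List.map_nil,
        List.sum_cons, List.sum_nil, add_zero, gsrEval, one_smul]
      rw [← applyWord_cons, ← List.replicate_succ]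
  | cons j β ih =>
      set x : E := applyWord X (β.map Fin.castSucc ++ List.replicate a (Fin.last n)) u with hx
      have hxD : x ∈ D := applyWord_mem X D hXD _ hu
      have lhs_eq : applyWord X ((j :: β).map Fin.castSucc ++ List.replicate a (Fin.last n)) u
          = X j.castSucc x := by
        simp only [List.map_cons, List.cons_append, applyWord_cons]
        rfl
      rw [lhs_eq, hc j x hxD]
      have hYx : X (Fin.last n) x = ((gsrPush c β a).map (gsrEval X u)).sum := ih
      have hsplit : (∑ p, c j p • X p x) =
          (∑ q : Fin n, c j q.castSucc • X q.castSucc x) +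
            c j (Fin.last n) • X (Fin.last n) x := by
        rw [Fin.sum_univ_castSucc]
      rw [hsplit, hYx]
      -- RHS
      simp only [gsrPush, List.map_append, List.sum_append, List.map_map, List.map_ofFn]
      have e1 : (List.map ((gsrEval X u) ∘ (fun t : ℂ × List (Fin n) × ℕ => (t.1, j :: t.2.1, t.2.2)))
            (gsrPush c β a)).sum = X j.castSucc (((gsrPush c β a).map (gsrEval X u)).sum) := by
        rw [map_sum_list]
        congr 1
        apply List.map_congr_left
        intro t _
        simp only [Function.comp_apply, gsrEval, List.map_cons, List.cons_append, map_smul,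
          applyWord_cons]
      have e2 : (List.ofFn ((gsrEval X u) ∘ fun q : Fin n =>
            ((-(c j q.castSucc), q :: β, a) : ℂ × List (Fin n) × ℕ))).sum
          = -(∑ q : Fin n, c j q.castSucc • X q.castSucc x) := by
        rw [List.sum_ofFn, ← Finset.sum_neg_distrib]
        apply Finset.sum_congr rfl
        intro q _
        simp only [Function.comp_apply, gsrEval, neg_smul, List.map_cons, List.cons_append,
          applyWord_cons, neg_inj]
        rfl
      have e3 : (List.map ((gsrEval X u) ∘ fun t : ℂ × List (Fin n) × ℕ =>
            ((-(c j (Fin.last n)) * t.1, t.2) : ℂ × List (Fin n) × ℕ)) (gsrPush c β a)).sum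
          = -(c j (Fin.last n) • ((gsrPush c β a).map (gsrEval X u)).sum) := by
        have : ((gsrEval X u) ∘ fun t : ℂ × List (Fin n) × ℕ =>
            ((-(c j (Fin.last n)) * t.1, t.2) : ℂ × List (Fin n) × ℕ))
            = fun t => (-(c j (Fin.last n))) • gsrEval X u t := by
          funext t
          simp only [Function.comp_apply, gsrEval, mul_smul, neg_smul]
        rw [this, list_map_sum_smul, neg_smul]
      rw [e1, e2, e3]
      abel

lemma gsrNF_eval
    (hXD : ∀ i, ∀ x ∈ D, X i x ∈ D)
    (hc : ∀ j : Fin n, ∀ x ∈ D,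
      X (Fin.last n) (X j.castSucc x) = X j.castSucc (X (Fin.last n) x) - ∑ p, c j p • X p x)
    {u : E} (hu : u ∈ D) (w : List (Fin (n + 1))) :
    applyWord X w u = ((gsrNF c w).map (gsrEval X u)).sum := by
  induction w with
  | nil => simp [gsrNF, gsrEval, applyWord_nil]
  | cons i w ih =>
      rw [applyWord_cons, ih, map_sum_list, gsrNF, sum_map_flatten_map]
      apply congrArg
      apply List.map_congr_left
      intro t _
      by_cases h : i = Fin.last n
      · rw [dif_pos h]
        subst h
        have : X (Fin.last n) (gsrEval X u t) =
            t.1 • ((gsrPush c t.2.1 t.2.2).map (gsrEval X u)).sum := by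
          rw [gsrEval, map_smul, gsrPush_eval X D c hXD hc hu]
        rw [this, ← list_map_sum_smul, List.map_map]
        congr 1
        apply List.map_congr_left
        intro s _
        simp only [Function.comp_apply, gsrEval, mul_smul]
      · rw [dif_neg h]
        simp only [List.map_cons, List.map_nil, List.sum_cons, List.sum_nil, add_zero,
          gsrEval, List.cons_append, map_smul]
        rw [applyWord_cons, Fin.castSucc_castPred]

end Eval

section Mass

variable {n : ℕ} (c : Fin n → Fin (n + 1) → ℂ)

lemma choose_split (b : ℕ) (G : ℕ → ℝ) :
    ∑ d ∈ Finset.range (b + 2), ((b + 1).choose d : ℝ) * G d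
      = (∑ d ∈ Finset.range (b + 1), (b.choose d : ℝ) * G d)
        + ∑ d ∈ Finset.range (b + 1), (b.choose d : ℝ) * G (d + 1) := by
  rw [Finset.sum_range_succ' (fun d => (((b + 1).choose d : ℝ)) * G d) (b + 1),
    Finset.sum_range_succ' (fun d => ((b.choose d : ℝ)) * G d) b]
  have h : ∀ i ∈ Finset.range (b + 1), (((b + 1).choose (i + 1) : ℝ)) * G (i + 1)
      = (b.choose i : ℝ) * G (i + 1) + (b.choose (i + 1) : ℝ) * G (i + 1) := by
    intro i _
    rw [Nat.choose_succ_succ]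
    push_cast
    ring
  rw [Finset.sum_congr rfl h, Finset.sum_add_distrib,
    Finset.sum_range_succ (fun i => ((b.choose (i + 1) : ℝ)) * G (i + 1)) b]
  simp only [Nat.choose_succ_self, Nat.cast_zero, zero_mul, add_zero, Nat.choose_zero_right,
    Nat.cast_one, one_mul]
  ring

lemma list_sum_nonneg' {τ : Type*} (l : List τ) (f : τ → ℝ) (hf : ∀ t ∈ l, 0 ≤ f t) :
    0 ≤ (l.map f).sum := by
  apply List.sum_nonneg
  intro x hx
  obtain ⟨t, ht, rfl⟩ := List.mem_map.1 hx
  exact hf t ht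

lemma gsrPush_mass (Cc : ℝ) (hCc : 0 ≤ Cc)
    (hB : ∀ j : Fin n, ∑ q : Fin n, ‖c j q.castSucc‖ ≤ Cc)
    (hL : ∀ j : Fin n, ‖c j (Fin.last n)‖ ≤ Cc)
    (β : List (Fin n)) (a : ℕ) :
    ∀ (g : ℕ → ℝ), (∀ d, 0 ≤ g d) →
    ((gsrPush c β a).map (fun t => ‖t.1‖ * g (β.length + a + 1 - gsrLen t))).sum
      ≤ ∑ d ∈ Finset.range (β.length + 1),
          (β.length.choose d : ℝ) * (2 * Cc) ^ d * g d := by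
  induction β with
  | nil =>
      intro g hg
      simp [gsrPush, gsrLen]
  | cons j β ih =>
      intro g hg
      set b := β.length with hb
      have hlen : (j :: β).length = b + 1 := rfl
      simp only [gsrPush, List.map_append, List.sum_append, List.map_map, List.map_ofFn]
      -- part A
      have eA : ((gsrPush c β a).map ((fun t : ℂ × List (Fin n) × ℕ =>
            ‖t.1‖ * g ((j :: β).length + a + 1 - gsrLen t)) ∘
            (fun t => (t.1, j :: t.2.1, t.2.2)))).sum
          = ((gsrPush c β a).map (fun t => ‖t.1‖ * g (β.length + a + 1 - gsrLen t))).sum := by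
        apply congrArg
        apply List.map_congr_left
        intro s _
        have : (j :: β).length + a + 1 - gsrLen (s.1, j :: s.2.1, s.2.2)
            = β.length + a + 1 - gsrLen s := by
          simp only [gsrLen, List.length_cons]
          omega
        simp only [Function.comp_apply, this]
      -- part C
      have eC : ((gsrPush c β a).map ((fun t : ℂ × List (Fin n) × ℕ =>
            ‖t.1‖ * g ((j :: β).length + a + 1 - gsrLen t)) ∘
            (fun t => (-(c j (Fin.last n)) * t.1, t.2)))).sum
          = ‖c j (Fin.last n)‖ *
            ((gsrPush c β a).map (fun t => ‖t.1‖ * (g ∘ (· + 1)) (β.length + a + 1 - gsrLen t))).sum := by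
        rw [← List.sum_map_mul_left]
        apply congrArg
        apply List.map_congr_left
        intro s hs
        have hls := gsrPush_len c β a s hs
        have : (j :: β).length + a + 1 - gsrLen (-(c j (Fin.last n)) * s.1, s.2)
            = (β.length + a + 1 - gsrLen s) + 1 := by
          simp only [gsrLen, List.length_cons]
          simp only [gsrLen] at hls
          omega
        simp only [Function.comp_apply, this, norm_mul, norm_neg]
        ring
      rw [eA, eC]
      -- part B
      have eB : (List.ofFn ((fun t : ℂ × List (Fin n) × ℕ =>
            ‖t.1‖ * g ((j :: β).length + a + 1 - gsrLen t)) ∘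
            (fun q : Fin n => ((-(c j q.castSucc), q :: β, a) : ℂ × List (Fin n) × ℕ)))).sum
          ≤ Cc * g 1 := by
        rw [List.sum_ofFn]
        have : ∀ q : Fin n, ((fun t : ℂ × List (Fin n) × ℕ =>
            ‖t.1‖ * g ((j :: β).length + a + 1 - gsrLen t)) ∘
            (fun q : Fin n => ((-(c j q.castSucc), q :: β, a) : ℂ × List (Fin n) × ℕ))) q
            = ‖c j q.castSucc‖ * g 1 := by
          intro q
          have : (j :: β).length + a + 1 - gsrLen ((-(c j q.castSucc), q :: β, a) : ℂ × List (Fin n) × ℕ) = 1 := by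
            simp only [gsrLen, List.length_cons]
            omega
          simp only [Function.comp_apply, this, norm_neg]
        rw [Finset.sum_congr rfl (fun q _ => this q), ← Finset.sum_mul]
        exact mul_le_mul_of_nonneg_right (hB j) (hg 1)
      -- assemble
      have hS1 := ih g hg
      have hS2 := ih (g ∘ (· + 1)) (fun d => hg (d + 1))
      have key := choose_split b (fun d => (2 * Cc) ^ d * g d)
      have hkey2 : ∑ d ∈ Finset.range (b + 1), (b.choose d : ℝ) *
            ((2 * Cc) ^ (d + 1) * g (d + 1))
          = (2 * Cc) * ∑ d ∈ Finset.range (b + 1), (b.choose d : ℝ) * (2 * Cc) ^ d *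
            ((g ∘ (· + 1)) d) := by
        rw [Finset.mul_sum]
        apply Finset.sum_congr rfl
        intro d _
        simp only [Function.comp_apply, pow_succ]
        ring
      have hS2' : 0 ≤ ∑ d ∈ Finset.range (b + 1), (b.choose d : ℝ) * (2 * Cc) ^ d *
          ((g ∘ (· + 1)) d) := by
        apply Finset.sum_nonneg
        intro d _
        have := hg (d + 1)
        positivity
      have hg1 : Cc * g 1 + ‖c j (Fin.last n)‖ *
            ((gsrPush c β a).map (fun t => ‖t.1‖ * (g ∘ (· + 1)) (β.length + a + 1 - gsrLen t))).sum
          ≤ (2 * Cc) * ∑ d ∈ Finset.range (b + 1), (b.choose d : ℝ) * (2 * Cc) ^ d *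
            ((g ∘ (· + 1)) d) := by
        have h1 : Cc * g 1 ≤ Cc * ∑ d ∈ Finset.range (b + 1), (b.choose d : ℝ) * (2 * Cc) ^ d *
            ((g ∘ (· + 1)) d) := by
          apply mul_le_mul_of_nonneg_left _ hCc
          have hmem : (0 : ℕ) ∈ Finset.range (b + 1) := by simp
          calc g 1 = (b.choose 0 : ℝ) * (2 * Cc) ^ 0 * ((g ∘ (· + 1)) 0) := by simp
          _ ≤ _ := Finset.single_le_sum (f := fun d => (b.choose d : ℝ) * (2 * Cc) ^ d *
              ((g ∘ (· + 1)) d)) (fun d _ => by have := hg (d + 1); positivity) hmem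
        have h2 : ‖c j (Fin.last n)‖ *
              ((gsrPush c β a).map (fun t => ‖t.1‖ * (g ∘ (· + 1)) (β.length + a + 1 - gsrLen t))).sum
            ≤ Cc * ∑ d ∈ Finset.range (b + 1), (b.choose d : ℝ) * (2 * Cc) ^ d *
              ((g ∘ (· + 1)) d) := by
          apply mul_le_mul (hL j) hS2 _ hCc
          apply list_sum_nonneg'
          intro t _
          have := hg ((β.length + a + 1 - gsrLen t) + 1)
          simp only [Function.comp_apply]
          positivity
        linarith
      calc _ ≤ (∑ d ∈ Finset.range (b + 1), (b.choose d : ℝ) * (2 * Cc) ^ d * g d)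
            + (Cc * g 1 + ‖c j (Fin.last n)‖ *
              ((gsrPush c β a).map (fun t => ‖t.1‖ * (g ∘ (· + 1)) (β.length + a + 1 - gsrLen t))).sum) := by
              linarith [hS1]
      _ ≤ (∑ d ∈ Finset.range (b + 1), (b.choose d : ℝ) * (2 * Cc) ^ d * g d)
            + (2 * Cc) * ∑ d ∈ Finset.range (b + 1), (b.choose d : ℝ) * (2 * Cc) ^ d *
              ((g ∘ (· + 1)) d) := by linarith
      _ = ∑ d ∈ Finset.range ((j :: β).length + 1),
            ((j :: β).length.choose d : ℝ) * (2 * Cc) ^ d * g d := by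
          rw [hlen]
          simp only [mul_assoc] at key hkey2 ⊢
          rw [key, hkey2]

end Mass

lemma sum_map_flatten_map' {τ σ M : Type*} [AddCommMonoid M] (F : τ → List σ) (ev : σ → M)
    (l : List τ) :
    (((l.map F).flatten).map ev).sum = (l.map (fun t => ((F t).map ev).sum)).sum := by
  induction l with
  | nil => simp
  | cons a l ih =>
      simp only [List.map_cons, List.flatten_cons, List.map_append, List.sum_append,
        List.sum_cons, ih]

lemma list_sum_le_sum {τ : Type*} (l : List τ) (f g : τ → ℝ) (h : ∀ t ∈ l, f t ≤ g t) :
    (l.map f).sum ≤ (l.map g).sum := by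
  induction l with
  | nil => simp
  | cons a l ih =>
      simp only [List.map_cons, List.sum_cons]
      have := h a (List.mem_cons_self)
      have := ih (fun t ht => h t (List.mem_cons_of_mem a ht))
      linarith

lemma gsrPush_weight {n : ℕ} (c : Fin n → Fin (n + 1) → ℂ) (Cc L : ℝ) (hCc : 0 ≤ Cc)
    (hL : 1 ≤ L)
    (hB : ∀ j : Fin n, ∑ q : Fin n, ‖c j q.castSucc‖ ≤ Cc)
    (hLst : ∀ j : Fin n, ‖c j (Fin.last n)‖ ≤ Cc)
    (β : List (Fin n)) (a : ℕ) :
    ((gsrPush c β a).map (fun t => ‖t.1‖ * L ^ (β.length + a + 1 - gsrLen t)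
        * ((gsrLen t).factorial : ℝ))).sum
      ≤ Real.exp (2 * Cc * L) * ((β.length + a + 1).factorial : ℝ) := by
  set N := β.length + a + 1 with hN
  have heq : ((gsrPush c β a).map (fun t => ‖t.1‖ * L ^ (N - gsrLen t)
        * ((gsrLen t).factorial : ℝ))).sum
      = ((gsrPush c β a).map (fun t => ‖t.1‖ *
          (fun d => L ^ d * ((N - d).factorial : ℝ)) (β.length + a + 1 - gsrLen t))).sum := by
    apply congrArg
    apply List.map_congr_left
    intro t ht
    have h1 := gsrPush_len c β a t ht
    have h2 : N - (N - gsrLen t) = gsrLen t := by omega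
    simp only [← hN, h2]
    ring
  rw [heq]
  have h1 := gsrPush_mass c Cc hCc hB hLst β a
      (fun d => L ^ d * ((N - d).factorial : ℝ))
      (fun d => by positivity)
  refine h1.trans ?_
  have h2 : ∀ d ∈ Finset.range (β.length + 1),
      (β.length.choose d : ℝ) * (2 * Cc) ^ d * (L ^ d * ((N - d).factorial : ℝ))
        ≤ (N.factorial : ℝ) * (2 * Cc * L) ^ d / (d.factorial : ℝ) := by
    intro d hd
    have hdb : d ≤ β.length := Nat.lt_succ_iff.1 (Finset.mem_range.1 hd)
    have hbN : β.length ≤ N := by omega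
    have hdN : d ≤ N := le_trans hdb hbN
    have hc1 : β.length.choose d ≤ N.choose d := Nat.choose_le_choose d hbN
    have hc2 : N.choose d * d.factorial * (N - d).factorial = N.factorial :=
      Nat.choose_mul_factorial_mul_factorial hdN
    have hc2' : (N.choose d : ℝ) * ((N - d).factorial : ℝ)
        = (N.factorial : ℝ) / (d.factorial : ℝ) := by
      have hdf : (0 : ℝ) < (d.factorial : ℝ) := by positivity
      field_simp
      push_cast [← hc2]
      ring
    calc (β.length.choose d : ℝ) * (2 * Cc) ^ d * (L ^ d * ((N - d).factorial : ℝ))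
        ≤ (N.choose d : ℝ) * (2 * Cc) ^ d * (L ^ d * ((N - d).factorial : ℝ)) := by
          have : (β.length.choose d : ℝ) ≤ (N.choose d : ℝ) := by exact_mod_cast hc1
          have hnn : (0:ℝ) ≤ (2 * Cc) ^ d * (L ^ d * ((N - d).factorial : ℝ)) := by positivity
          nlinarith [this, hnn]
      _ = ((N.choose d : ℝ) * ((N - d).factorial : ℝ)) * (2 * Cc * L) ^ d := by
          rw [mul_pow]; ring
      _ = (N.factorial : ℝ) * (2 * Cc * L) ^ d / (d.factorial : ℝ) := by
          rw [hc2']; ring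
  refine (Finset.sum_le_sum h2).trans ?_
  have h3 : ∑ d ∈ Finset.range (β.length + 1), (N.factorial : ℝ) * (2 * Cc * L) ^ d / (d.factorial : ℝ)
      = (N.factorial : ℝ) * ∑ d ∈ Finset.range (β.length + 1), (2 * Cc * L) ^ d / (d.factorial : ℝ) := by
    rw [Finset.mul_sum]
    apply Finset.sum_congr rfl
    intro d _
    ring
  rw [h3]
  have h4 : ∑ d ∈ Finset.range (β.length + 1), (2 * Cc * L) ^ d / (d.factorial : ℝ)
      ≤ Real.exp (2 * Cc * L) := Real.sum_le_exp_of_nonneg (by positivity) _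
  have : (0:ℝ) ≤ (N.factorial : ℝ) := by positivity
  nlinarith [h4, this]

lemma gsrNF_mass {n : ℕ} (c : Fin n → Fin (n + 1) → ℂ) (Cc L : ℝ) (hCc : 0 ≤ Cc)
    (hL : 1 ≤ L)
    (hB : ∀ j : Fin n, ∑ q : Fin n, ‖c j q.castSucc‖ ≤ Cc)
    (hLst : ∀ j : Fin n, ‖c j (Fin.last n)‖ ≤ Cc)
    (w : List (Fin (n + 1))) :
    ((gsrNF c w).map (fun t => ‖t.1‖ * L ^ (w.length - gsrLen t)
        * ((gsrLen t).factorial : ℝ))).sum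
      ≤ (Real.exp (2 * Cc * L) + 1) ^ w.length * (w.length.factorial : ℝ) := by
  set Ex := Real.exp (2 * Cc * L) with hEx
  have hEx1 : 1 ≤ Ex := by
    rw [hEx]
    have : (0:ℝ) ≤ 2 * Cc * L := by positivity
    calc (1:ℝ) = Real.exp 0 := Real.exp_zero.symm
    _ ≤ _ := Real.exp_le_exp.2 this
  induction w with
  | nil => simp [gsrNF, gsrLen]
  | cons i w ih =>
      set k := w.length with hk
      have hlen : (i :: w).length = k + 1 := rfl
      rw [gsrNF, hlen]
      rw [sum_map_flatten_map']
      have hterm : ∀ t ∈ gsrNF c w,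
          (((if h : i = Fin.last n then (gsrPush c t.2.1 t.2.2).map (fun s => (t.1 * s.1, s.2))
            else [(t.1, i.castPred h :: t.2.1, t.2.2)]).map
              (fun s => ‖s.1‖ * L ^ (k + 1 - gsrLen s) * ((gsrLen s).factorial : ℝ))).sum)
          ≤ Ex * (k + 1) * (‖t.1‖ * L ^ (k - gsrLen t) * ((gsrLen t).factorial : ℝ)) := by
        intro t ht
        have htk := gsrNF_len c w t ht
        by_cases h : i = Fin.last n
        · rw [dif_pos h]
          rw [List.map_map]
          have heq : ((gsrPush c t.2.1 t.2.2).map ((fun s => ‖s.1‖ * L ^ (k + 1 - gsrLen s)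
                * ((gsrLen s).factorial : ℝ)) ∘ (fun s => (t.1 * s.1, s.2)))).sum
              = (‖t.1‖ * L ^ (k - gsrLen t)) * ((gsrPush c t.2.1 t.2.2).map
                (fun s => ‖s.1‖ * L ^ (t.2.1.length + t.2.2 + 1 - gsrLen s)
                  * ((gsrLen s).factorial : ℝ))).sum := by
            rw [← List.sum_map_mul_left]
            apply congrArg
            apply List.map_congr_left
            intro s hs
            have hs1 := gsrPush_len c t.2.1 t.2.2 s hs
            have hsplit : k + 1 - gsrLen s
                = (k - gsrLen t) + (t.2.1.length + t.2.2 + 1 - gsrLen s) := by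
              simp only [gsrLen] at *
              omega
            have hg : gsrLen ((t.1 * s.1, s.2) : ℂ × List (Fin n) × ℕ) = gsrLen s := rfl
            simp only [Function.comp_apply, norm_mul, hg]
            rw [hsplit, pow_add]
            ring
          rw [heq]
          have hpw := gsrPush_weight c Cc L hCc hL hB hLst t.2.1 t.2.2
          have hfact : ((t.2.1.length + t.2.2 + 1).factorial : ℝ)
              ≤ (k + 1) * ((gsrLen t).factorial : ℝ) := by
            have : (t.2.1.length + t.2.2 + 1).factorial
                = (gsrLen t + 1) * (gsrLen t).factorial := by
              simp only [gsrLen]; rw [Nat.factorial_succ]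
            rw [this]
            push_cast
            have h1 : (gsrLen t : ℝ) + 1 ≤ (k : ℝ) + 1 := by exact_mod_cast Nat.succ_le_succ htk
            have h2 : (0:ℝ) ≤ ((gsrLen t).factorial : ℝ) := by positivity
            nlinarith
          have hnn : (0:ℝ) ≤ ‖t.1‖ * L ^ (k - gsrLen t) := by positivity
          calc (‖t.1‖ * L ^ (k - gsrLen t)) * ((gsrPush c t.2.1 t.2.2).map
                (fun s => ‖s.1‖ * L ^ (t.2.1.length + t.2.2 + 1 - gsrLen s)
                  * ((gsrLen s).factorial : ℝ))).sum
              ≤ (‖t.1‖ * L ^ (k - gsrLen t)) * (Ex * ((t.2.1.length + t.2.2 + 1).factorial : ℝ)) :=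
                mul_le_mul_of_nonneg_left hpw hnn
            _ ≤ Ex * (k + 1) * (‖t.1‖ * L ^ (k - gsrLen t) * ((gsrLen t).factorial : ℝ)) := by
                have hEx0 : (0:ℝ) ≤ Ex := le_trans zero_le_one hEx1
                nlinarith [hfact, hnn, hEx0, mul_le_mul_of_nonneg_left hfact (mul_nonneg hEx0 hnn)]
        · rw [dif_neg h]
          simp only [List.map_cons, List.map_nil, List.sum_cons, List.sum_nil, add_zero]
          have h1 : gsrLen ((t.1, i.castPred h :: t.2.1, t.2.2) : ℂ × List (Fin n) × ℕ)
              = gsrLen t + 1 := by simp only [gsrLen, List.length_cons]; omega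
          rw [h1]
          have h2 : k + 1 - (gsrLen t + 1) = k - gsrLen t := by omega
          rw [h2, Nat.factorial_succ]
          push_cast
          have h3 : (gsrLen t : ℝ) + 1 ≤ (k : ℝ) + 1 := by exact_mod_cast Nat.succ_le_succ htk
          have h4 : (0:ℝ) ≤ ‖t.1‖ * L ^ (k - gsrLen t) * ((gsrLen t).factorial : ℝ) := by positivity
          nlinarith [mul_le_mul_of_nonneg_left h3 h4,
            mul_nonneg (mul_nonneg (sub_nonneg.2 hEx1)
              (by positivity : (0:ℝ) ≤ (k:ℝ) + 1)) h4]
      have hsum := list_sum_le_sum (gsrNF c w) _ _ hterm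
      refine hsum.trans ?_
      have : ((gsrNF c w).map (fun t => Ex * (k + 1) *
            (‖t.1‖ * L ^ (k - gsrLen t) * ((gsrLen t).factorial : ℝ)))).sum
          = Ex * (k + 1) * ((gsrNF c w).map
            (fun t => ‖t.1‖ * L ^ (k - gsrLen t) * ((gsrLen t).factorial : ℝ))).sum := by
        rw [← List.sum_map_mul_left]
      rw [this]
      have hnn2 : (0:ℝ) ≤ Ex * (k + 1) := by positivity
      calc Ex * (k + 1) * ((gsrNF c w).map
            (fun t => ‖t.1‖ * L ^ (k - gsrLen t) * ((gsrLen t).factorial : ℝ))).sum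
          ≤ Ex * (k + 1) * ((Ex + 1) ^ k * (k.factorial : ℝ)) :=
            mul_le_mul_of_nonneg_left ih hnn2
        _ ≤ (Ex + 1) ^ (k + 1) * ((k + 1).factorial : ℝ) := by
            rw [Nat.factorial_succ, pow_succ]
            push_cast
            have e1 : (0:ℝ) ≤ Ex := le_trans zero_le_one hEx1
            have e2 : (0:ℝ) ≤ (Ex + 1) ^ k := by positivity
            have e3 : (0:ℝ) ≤ (k.factorial : ℝ) := by positivity
            have e4 : Ex ≤ Ex + 1 := by linarith
            have e6 : (0:ℝ) ≤ (Ex + 1) ^ k * ((k:ℝ) + 1) * (k.factorial : ℝ) := by positivity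
            nlinarith [mul_le_mul_of_nonneg_right e4 e6]

section Mseq

variable (m : ℕ → ℝ)

lemma m_ratio (hmpos : ∀ p, 0 < m p) (hA1 : ∀ p : ℕ, 1 ≤ p → (m p) ^ 2 ≤ m (p - 1) * m (p + 1)) :
    ∀ k d : ℕ, m (k + 1) * m (k + d) ≤ m k * m (k + d + 1) := by
  intro k d
  induction d with
  | zero => ring_nf; nlinarith [hmpos k, hmpos (k+1)]
  | succ d ih =>
      have hA := hA1 (k + d + 1) (by omega)
      have hA' : m (k + d + 1) ^ 2 ≤ m (k + d) * m (k + d + 2) := by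
        have : (k + d + 1) - 1 = k + d := by omega
        rwa [this] at hA
      have h1 : m (k + 1) * m (k + d) * m (k + d + 1) ≤ m k * m (k + d + 1) * m (k + d + 1) :=
        mul_le_mul_of_nonneg_right ih (le_of_lt (hmpos (k + d + 1)))
      have h2 : m k * (m (k + d + 1) * m (k + d + 1)) ≤ m k * (m (k + d) * m (k + d + 2)) := by
        apply mul_le_mul_of_nonneg_left _ (le_of_lt (hmpos k))
        nlinarith [hA']
      have h3 : m (k + 1) * m (k + d) * m (k + d + 1) ≤ m k * m (k + d) * m (k + d + 2) := by
        nlinarith [h1, h2]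
      have hpos := hmpos (k + d)
      have goal' : m (k + d) * (m (k + 1) * m (k + d + 1)) ≤ m (k + d) * (m k * m (k + d + 2)) := by
        nlinarith [h3]
      have := le_of_mul_le_mul_left goal' hpos
      calc m (k + 1) * m (k + d + 1) ≤ m k * m (k + d + 2) := this
      _ = m k * m (k + (d + 1) + 1) := by ring_nf
  
lemma m_superadd (hmpos : ∀ p, 0 < m p) (hA0 : m 0 = 1 ∧ m 1 = 1)
    (hA1 : ∀ p : ℕ, 1 ≤ p → (m p) ^ 2 ≤ m (p - 1) * m (p + 1)) :
    ∀ p q : ℕ, m p * m q ≤ m (p + q) := by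
  intro p
  induction p with
  | zero => intro q; rw [hA0.1, one_mul, zero_add]
  | succ p ih =>
      intro q
      have hR := m_ratio m hmpos hA1 p q
      have h1 : m (p + 1) * (m p * m q) ≤ m (p + 1) * m (p + q) :=
        mul_le_mul_of_nonneg_left (ih q) (le_of_lt (hmpos (p + 1)))
      have h2 : m (p + 1) * m (p + q) ≤ m p * m (p + q + 1) := hR
      have h3 : m p * (m (p + 1) * m q) ≤ m p * m (p + q + 1) := by nlinarith [h1, h2]
      have := le_of_mul_le_mul_left h3 (hmpos p)
      calc m (p + 1) * m q ≤ m (p + q + 1) := this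
      _ = m (p + 1 + q) := by ring_nf

lemma m_one_le (hmpos : ∀ p, 0 < m p) (hA0 : m 0 = 1 ∧ m 1 = 1)
    (hA1 : ∀ p : ℕ, 1 ≤ p → (m p) ^ 2 ≤ m (p - 1) * m (p + 1)) :
    ∀ p, 1 ≤ m p := by
  intro p
  induction p with
  | zero => rw [hA0.1]
  | succ p ih =>
      have := m_superadd m hmpos hA0 hA1 p 1
      rw [hA0.2, mul_one] at this
      linarith

lemma m_mono (hmpos : ∀ p, 0 < m p) (hA0 : m 0 = 1 ∧ m 1 = 1)
    (hA1 : ∀ p : ℕ, 1 ≤ p → (m p) ^ 2 ≤ m (p - 1) * m (p + 1)) :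
    ∀ p q, p ≤ q → m p ≤ m q := by
  intro p q hpq
  have h := m_superadd m hmpos hA0 hA1 p (q - p)
  have h2 : 1 ≤ m (q - p) := m_one_le m hmpos hA0 hA1 _
  have h3 : p + (q - p) = q := by omega
  rw [h3] at h
  nlinarith [hmpos p]

lemma m_A3_chain (hmpos : ∀ p, 0 < m p) (L : ℝ) (hL : 1 ≤ L)
    (hA3 : ∀ p : ℕ, 1 ≤ p → (p : ℝ) * m (p - 1) ≤ L * m p) :
    ∀ k ℓ : ℕ, ℓ ≤ k → m ℓ * (k.factorial : ℝ) ≤ L ^ (k - ℓ) * (ℓ.factorial : ℝ) * m k := by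
  intro k
  induction k with
  | zero =>
      intro ℓ hℓ
      have : ℓ = 0 := by omega
      subst this
      simp
  | succ k ih =>
      intro ℓ hℓ
      rcases Nat.eq_or_lt_of_le hℓ with h | h
      · subst h
        simp [mul_comm]
      · have hℓk : ℓ ≤ k := by omega
        have h1 := ih ℓ hℓk
        have hstep := hA3 (k + 1) (by omega)
        have hstep' : ((k : ℝ) + 1) * m k ≤ L * m (k + 1) := by
          have : (k + 1) - 1 = k := by omega
          rw [this] at hstep
          push_cast at hstep
          exact hstep
        have hfs : ((k + 1).factorial : ℝ) = ((k : ℝ) + 1) * (k.factorial : ℝ) := by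
          rw [Nat.factorial_succ]; push_cast; ring
        have hsub : k + 1 - ℓ = (k - ℓ) + 1 := by omega
        rw [hfs, hsub, pow_succ]
        have hm : 0 ≤ m ℓ := le_of_lt (hmpos ℓ)
        have hLk : (0:ℝ) ≤ L ^ (k - ℓ) * (ℓ.factorial : ℝ) := by positivity
        calc m ℓ * (((k : ℝ) + 1) * (k.factorial : ℝ))
            = ((k : ℝ) + 1) * (m ℓ * (k.factorial : ℝ)) := by ring
          _ ≤ ((k : ℝ) + 1) * (L ^ (k - ℓ) * (ℓ.factorial : ℝ) * m k) := by
              apply mul_le_mul_of_nonneg_left h1 (by positivity)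
          _ = (L ^ (k - ℓ) * (ℓ.factorial : ℝ)) * (((k : ℝ) + 1) * m k) := by ring
          _ ≤ (L ^ (k - ℓ) * (ℓ.factorial : ℝ)) * (L * m (k + 1)) := by
              apply mul_le_mul_of_nonneg_left hstep' hLk
          _ = L ^ (k - ℓ) * L * (ℓ.factorial : ℝ) * m (k + 1) := by ring

lemma m_prod_le (hmpos : ∀ p, 0 < m p) (hA0 : m 0 = 1 ∧ m 1 = 1)
    (hA1 : ∀ p : ℕ, 1 ≤ p → (m p) ^ 2 ≤ m (p - 1) * m (p + 1))
    {ι : Type*} [DecidableEq ι] (s : Finset ι) (f : ι → ℕ) :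
    ∏ j ∈ s, m (f j) ≤ m (∑ j ∈ s, f j) := by
  induction s using Finset.induction_on with
  | empty => simp [hA0.1]
  | @insert a s ha ih =>
      rw [Finset.prod_insert ha, Finset.sum_insert ha]
      calc m (f a) * ∏ j ∈ s, m (f j) ≤ m (f a) * m (∑ j ∈ s, f j) :=
            mul_le_mul_of_nonneg_left ih (le_of_lt (hmpos _))
        _ ≤ m (f a + ∑ j ∈ s, f j) := m_superadd m hmpos hA0 hA1 _ _

lemma m_sum_le (hmpos : ∀ p, 0 < m p) (hA0 : m 0 = 1 ∧ m 1 = 1) (H : ℝ) (hH : 1 ≤ H)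
    (hA2 : ∀ p q, m (p + q) ≤ H ^ (p + q) * m p * m q)
    {ι : Type*} [DecidableEq ι] (s : Finset ι) (f : ι → ℕ) :
    m (∑ j ∈ s, f j) ≤ H ^ (s.card * (∑ j ∈ s, f j)) * ∏ j ∈ s, m (f j) := by
  induction s using Finset.induction_on with
  | empty => simp [hA0.1]
  | @insert a s ha ih =>
      rw [Finset.prod_insert ha, Finset.sum_insert ha, Finset.card_insert_of_notMem ha]
      have h1 := hA2 (f a) (∑ j ∈ s, f j)
      have h2 : m (f a) * m (∑ j ∈ s, f j) ≤ m (f a) *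
          (H ^ (s.card * ∑ j ∈ s, f j) * ∏ j ∈ s, m (f j)) :=
        mul_le_mul_of_nonneg_left ih (le_of_lt (hmpos _))
      have hHp : (0:ℝ) < H := lt_of_lt_of_le zero_lt_one hH
      have h3 : m (f a + ∑ j ∈ s, f j) ≤
          H ^ (f a + ∑ j ∈ s, f j) * H ^ (s.card * ∑ j ∈ s, f j) *
            (m (f a) * ∏ j ∈ s, m (f j)) := by
        calc m (f a + ∑ j ∈ s, f j) ≤ H ^ (f a + ∑ j ∈ s, f j) * m (f a) * m (∑ j ∈ s, f j) := h1
          _ = H ^ (f a + ∑ j ∈ s, f j) * (m (f a) * m (∑ j ∈ s, f j)) := by ring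
          _ ≤ H ^ (f a + ∑ j ∈ s, f j) * (m (f a) *
              (H ^ (s.card * ∑ j ∈ s, f j) * ∏ j ∈ s, m (f j))) := by
              apply mul_le_mul_of_nonneg_left h2 (by positivity)
          _ = H ^ (f a + ∑ j ∈ s, f j) * H ^ (s.card * ∑ j ∈ s, f j) *
              (m (f a) * ∏ j ∈ s, m (f j)) := by ring
      refine h3.trans ?_
      rw [← pow_add]
      have hexp : (f a + ∑ j ∈ s, f j) + s.card * ∑ j ∈ s, f j
          ≤ (s.card + 1) * (f a + ∑ j ∈ s, f j) := by
        have h1 : s.card * ∑ j ∈ s, f j ≤ s.card * (f a + ∑ j ∈ s, f j) :=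
          Nat.mul_le_mul_left _ (by omega)
        have h2 : (s.card + 1) * (f a + ∑ j ∈ s, f j)
            = s.card * (f a + ∑ j ∈ s, f j) + (f a + ∑ j ∈ s, f j) := by ring
        omega
      have hmono : H ^ ((f a + ∑ j ∈ s, f j) + s.card * ∑ j ∈ s, f j)
          ≤ H ^ ((s.card + 1) * (f a + ∑ j ∈ s, f j)) := pow_le_pow_right₀ hH hexp
      have hprod : (0:ℝ) ≤ m (f a) * ∏ j ∈ s, m (f j) := by
        have := hmpos (f a)
        have : (0:ℝ) ≤ ∏ j ∈ s, m (f j) := Finset.prod_nonneg (fun j _ => (hmpos (f j)).le)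
        positivity
      exact mul_le_mul_of_nonneg_right hmono hprod

end Mseq

lemma sum_count_eq_length {N : ℕ} (α : List (Fin N)) :
    ∑ j : Fin N, α.count j = α.length := by
  induction α with
  | nil => simp
  | cons a α ih =>
      have : ∀ j : Fin N, (a :: α).count j = α.count j + if j = a then 1 else 0 := by
        intro j
        rw [List.count_cons]
        congr 1
        by_cases h : j = a
        · subst h; simp
        · rw [if_neg h, if_neg (by simpa [beq_iff_eq] using Ne.symm h)]
      rw [Finset.sum_congr rfl (fun j _ => this j), Finset.sum_add_distrib, ih]
      simp [List.length_cons]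


set_option maxHeartbeats 2000000 in
/-- Proposition 3.3.  The family consists of `n+1` operators
(the paper's `X_1, …, X_n`, with `X_n = X (Fin.last n)` and `X' = X ∘ Fin.castSucc`),
Hermitian or skew-Hermitian on a common invariant domain `D`, with
`[X_j, X_n] ∈ span{X_1, …, X_n}` on `D` for all `j ∈ {1, …, n-1}`.  For a single
sequence `m` satisfying (A0)–(A2) and (A3'), `u ∈ D` belongs to `S_𝐦(𝐗)` iff
`u ∈ S_{𝐦'}(𝐗') ∩ S_m(X_n)`. -/
theorem gsr_split_last_span
    {E : Type*} [NormedAddCommGroup E] [InnerProductSpace ℂ E] [CompleteSpace E]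
    (n : ℕ) (hn : 1 ≤ n) (D : Submodule ℂ E)
    (X : Fin (n + 1) → E →ₗ[ℂ] E)
    (hXD : ∀ i, ∀ x ∈ D, X i x ∈ D)
    (hherm : ∀ i, (∀ u ∈ D, ∀ v ∈ D, ⟪X i u, v⟫ = ⟪u, X i v⟫) ∨
                  (∀ u ∈ D, ∀ v ∈ D, ⟪X i u, v⟫ = -⟪u, X i v⟫))
    (hcomm : ∀ j : Fin n, ∃ c : Fin (n + 1) → ℂ, ∀ x ∈ D,
      X j.castSucc (X (Fin.last n) x) - X (Fin.last n) (X j.castSucc x) =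
        ∑ p, c p • X p x)
    (m : ℕ → ℝ) (hmpos : ∀ p, 0 < m p)
    (hA0 : m 0 = 1 ∧ m 1 = 1)
    (hA1 : ∀ p : ℕ, 1 ≤ p → (m p) ^ 2 ≤ m (p - 1) * m (p + 1))
    (hA2 : ∃ H : ℝ, 0 < H ∧ ∀ p q, m (p + q) ≤ H ^ (p + q) * m p * m q)
    (hA3' : ∃ L : ℝ, 1 ≤ L ∧ ∀ p : ℕ, 1 ≤ p → (p : ℝ) * m (p - 1) ≤ L * m p)
    (u : E) (hu : u ∈ D) :
    memGSRsingle m X u ↔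
      (memGSRsingle m (fun j : Fin n => X j.castSucc) u ∧
        memGSRone m (X (Fin.last n)) u) := by
  classical
  constructor
  · rintro ⟨C, A, hC, hA, h⟩
    constructor
    · refine ⟨C, A, hC, hA, ?_⟩
      intro α hα
      have hmap : applyWord (fun j : Fin n => X j.castSucc) α u
          = applyWord X (α.map Fin.castSucc) u := (applyWord_map X Fin.castSucc α u).symm
      rw [hmap]
      have hne : α.map Fin.castSucc ≠ [] := by
        simpa using hα
      have hb := h (α.map Fin.castSucc) hne
      rw [List.length_map] at hb
      refine hb.trans_eq ?_
      congr 1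
      rw [Fin.prod_univ_castSucc]
      have hlast : (α.map Fin.castSucc).count (Fin.last n) = 0 := by
        rw [List.count_eq_zero]
        intro hmem
        obtain ⟨j, hj, hje⟩ := List.mem_map.1 hmem
        exact Fin.ne_of_lt (Fin.castSucc_lt_last j) hje
      rw [hlast, hA0.1, mul_one]
      apply Finset.prod_congr rfl
      intro j _
      rw [List.count_map_of_injective _ _ (Fin.castSucc_injective n)]
    · refine ⟨C + ‖u‖, A, by positivity, hA, ?_⟩
      intro k
      cases k with
      | zero =>
          have h0 : ((X (Fin.last n)) ^ 0) u = u := by simp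
          rw [h0, pow_zero, hA0.1]
          have := norm_nonneg u
          linarith
      | succ k =>
          have hrep : ((X (Fin.last n)) ^ (k + 1)) u
              = applyWord X (List.replicate (k + 1) (Fin.last n)) u :=
            (applyWord_replicate X (Fin.last n) (k + 1) u).symm
          rw [hrep]
          have hne : List.replicate (k + 1) (Fin.last n) ≠ [] := by simp
          have hb := h _ hne
          rw [List.length_replicate] at hb
          have hprod : (∏ j : Fin (n + 1), m ((List.replicate (k + 1) (Fin.last n)).count j))
              = m (k + 1) := by
            rw [Fin.prod_univ_castSucc]
            have h1 : ∀ j : Fin n, (List.replicate (k + 1) (Fin.last n)).count j.castSucc = 0 := by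
              intro j
              rw [List.count_replicate]
              rw [if_neg (by simpa [beq_iff_eq] using (Fin.ne_of_lt (Fin.castSucc_lt_last j)).symm)]
            have h2 : (List.replicate (k + 1) (Fin.last n)).count (Fin.last n) = k + 1 := by
              rw [List.count_replicate, if_pos (by simp)]
            rw [h2]
            have : ∀ j : Fin n, m ((List.replicate (k + 1) (Fin.last n)).count j.castSucc) = 1 := by
              intro j; rw [h1 j, hA0.1]
            rw [Finset.prod_congr rfl (fun j _ => this j)]
            simp
          rw [hprod] at hb
          refine hb.trans ?_
          have : (0:ℝ) ≤ A ^ (k + 1) * m (k + 1) :=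
            mul_nonneg (pow_nonneg hA.le _) (hmpos _).le
          nlinarith [norm_nonneg u]
  · rintro ⟨⟨C1, A1, hC1, hA1', h1⟩, ⟨C2, A2, hC2, hA2', h2⟩⟩
    obtain ⟨H, hHpos, hA2c⟩ := hA2
    obtain ⟨L, hL1, hA3⟩ := hA3'
    choose c hc using hcomm
    have hc' : ∀ j : Fin n, ∀ x ∈ D,
        X (Fin.last n) (X j.castSucc x)
          = X j.castSucc (X (Fin.last n) x) - ∑ p, c j p • X p x := by
      intro j x hx
      have h := hc j x hx
      rw [← h]
      abel
    set Cc : ℝ := ∑ j : Fin n, ∑ p : Fin (n + 1), ‖c j p‖ with hCcdef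
    have hCc : 0 ≤ Cc :=
      Finset.sum_nonneg fun j _ => Finset.sum_nonneg fun p _ => norm_nonneg _
    have hrow : ∀ j : Fin n, ∑ p : Fin (n + 1), ‖c j p‖ ≤ Cc := by
      intro j
      exact Finset.single_le_sum (f := fun j => ∑ p : Fin (n + 1), ‖c j p‖)
        (fun j _ => Finset.sum_nonneg fun p _ => norm_nonneg _) (Finset.mem_univ j)
    have hB : ∀ j : Fin n, ∑ q : Fin n, ‖c j q.castSucc‖ ≤ Cc := by
      intro j
      refine le_trans ?_ (hrow j)
      rw [Fin.sum_univ_castSucc (f := fun p => ‖c j p‖)]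
      have := norm_nonneg (c j (Fin.last n))
      linarith
    have hLst : ∀ j : Fin n, ‖c j (Fin.last n)‖ ≤ Cc := by
      intro j
      refine le_trans ?_ (hrow j)
      rw [Fin.sum_univ_castSucc (f := fun p => ‖c j p‖)]
      have : (0:ℝ) ≤ ∑ q : Fin n, ‖c j q.castSucc‖ :=
        Finset.sum_nonneg fun q _ => norm_nonneg _
      linarith
    set H1 : ℝ := max H 1 with hH1def
    have hH1 : 1 ≤ H1 := le_max_right _ _
    have hHH1 : H ≤ H1 := le_max_left _ _
    have hA2c1 : ∀ p q, m (p + q) ≤ H1 ^ (p + q) * m p * m q := by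
      intro p q
      refine (hA2c p q).trans ?_
      have h1' : H ^ (p + q) ≤ H1 ^ (p + q) := pow_le_pow_left₀ hHpos.le hHH1 _
      have h2' : (0:ℝ) ≤ m p * m q := mul_nonneg (hmpos p).le (hmpos q).le
      nlinarith [h1', h2']
    set CC : ℝ := max (max C1 C2) (‖u‖ + 1) with hCCdef
    have hCC0 : 0 < CC := lt_of_lt_of_le (by positivity) (le_max_right (max C1 C2) (‖u‖ + 1))
    have hCCu : ‖u‖ ≤ CC := le_trans (by linarith) (le_max_right (max C1 C2) (‖u‖ + 1))
    have hCC1 : C1 ≤ CC := le_trans (le_max_left _ _) (le_max_left _ _)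
    have hCC2 : C2 ≤ CC := le_trans (le_max_right _ _) (le_max_left _ _)
    set AA : ℝ := max (max A1 A2) 1 with hAAdef
    have hAA1 : 1 ≤ AA := le_max_right _ _
    have hAA0 : 0 < AA := lt_of_lt_of_le zero_lt_one hAA1
    have hAAA1 : A1 ≤ AA := le_trans (le_max_left _ _) (le_max_left _ _)
    have hAAA2 : A2 ≤ AA := le_trans (le_max_right _ _) (le_max_left _ _)
    set Ex : ℝ := Real.exp (2 * Cc * L) with hExdef
    have hEx1 : 1 ≤ Ex := by
      have h0 : (0:ℝ) ≤ 2 * Cc * L := by positivity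
      have := Real.add_one_le_exp (2 * Cc * L)
      rw [hExdef]
      linarith
    set Econ : ℝ := Ex + 1 with hEcondef
    have hEcon1 : 1 ≤ Econ := by linarith
    -- bounds for pure words
    have hwordX' : ∀ β : List (Fin n),
        ‖applyWord X (β.map Fin.castSucc) u‖ ≤ CC * AA ^ β.length * m β.length := by
      intro β
      cases β with
      | nil =>
          simp only [List.map_nil, List.length_nil, pow_zero, mul_one, hA0.1]
          rw [applyWord_nil]
          linarith
      | cons j β' =>
          rw [applyWord_map]
          have hne : (j :: β') ≠ [] := by simp
          have hb := h1 (j :: β') hne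
          refine hb.trans ?_
          have hprod : (∏ q : Fin n, m ((j :: β').count q)) ≤ m ((j :: β').length) := by
            have := m_prod_le m hmpos hA0 hA1 (Finset.univ : Finset (Fin n))
              (fun q => (j :: β').count q)
            rw [sum_count_eq_length] at this
            exact this
          have hprodnn : (0:ℝ) ≤ ∏ q : Fin n, m ((j :: β').count q) :=
            Finset.prod_nonneg fun q _ => (hmpos _).le
          have hpow : A1 ^ (j :: β').length ≤ AA ^ (j :: β').length :=
            pow_le_pow_left₀ hA1'.le hAAA1 _
          have hAApow : (0:ℝ) ≤ AA ^ (j :: β').length := by positivity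
          have hA1pow : (0:ℝ) ≤ A1 ^ (j :: β').length := by positivity
          have hmlen := hmpos ((j :: β').length)
          calc C1 * A1 ^ (j :: β').length * ∏ q : Fin n, m ((j :: β').count q)
              ≤ CC * AA ^ (j :: β').length * ∏ q : Fin n, m ((j :: β').count q) := by
                apply mul_le_mul_of_nonneg_right _ hprodnn
                nlinarith [hC1.le, hCC1, hpow, hA1pow]
            _ ≤ CC * AA ^ (j :: β').length * m ((j :: β').length) := by
                apply mul_le_mul_of_nonneg_left hprod (by positivity)
    have hwordY : ∀ a : ℕ,
        ‖applyWord X (List.replicate a (Fin.last n)) u‖ ≤ CC * AA ^ a * m a := by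
      intro a
      rw [applyWord_replicate]
      refine (h2 a).trans ?_
      have hpow : A2 ^ a ≤ AA ^ a := pow_le_pow_left₀ hA2'.le hAAA2 _
      have hma := hmpos a
      have hA2pow : (0:ℝ) ≤ A2 ^ a := by positivity
      have hh : C2 * A2 ^ a ≤ CC * AA ^ a := mul_le_mul hCC2 hpow hA2pow hCC0.le
      exact mul_le_mul_of_nonneg_right hh hma.le
    -- the key estimate
    have key : ∀ α : List (Fin (n + 1)),
        ‖applyWord X α u‖ ≤ CC * (AA * Econ * H1) ^ α.length * m α.length := by
      intro α
      set k := α.length with hkdef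
      set v : List (Fin (n + 1)) := α.reverse ++ α with hvdef
      have hvlen : v.length = k + k := by
        rw [hvdef, List.length_append, List.length_reverse]
      have hXα : applyWord X α u ∈ D := applyWord_mem X D hXD _ hu
      have hsq : ‖applyWord X α u‖ ^ 2 = ‖(⟪u, applyWord X v u⟫ : ℂ)‖ := by
        have h1' : ‖(⟪applyWord X α u, applyWord X α u⟫ : ℂ)‖ = ‖applyWord X α u‖ ^ 2 := by
          rw [inner_self_eq_norm_sq_to_K]
          simp
        rw [← h1', abs_inner_word X D hXD hherm α u hu (applyWord X α u) hXα,
          ← applyWord_append]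
      have hNF := gsrNF_eval X D c hXD hc' hu v
      -- termwise bound on inner products
      have hterm : ∀ t ∈ gsrNF c v, ‖(⟪u, gsrEval X u t⟫ : ℂ)‖
          ≤ (CC ^ 2 * AA ^ (k + k)) * (‖t.1‖ * m (gsrLen t)) := by
        intro t ht
        have htl := gsrNF_len c v t ht
        rw [hvlen] at htl
        obtain ⟨ct, βt, aT⟩ := t
        simp only [gsrLen] at htl ⊢
        have hzD : applyWord X (List.replicate aT (Fin.last n)) u ∈ D :=
          applyWord_mem X D hXD _ hu
        have e1 : gsrEval X u (ct, βt, aT) = ct • applyWord X (βt.map Fin.castSucc)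
            (applyWord X (List.replicate aT (Fin.last n)) u) := by
          rw [gsrEval, applyWord_append]
        rw [e1, inner_smul_right, norm_mul]
        set z : E := applyWord X (List.replicate aT (Fin.last n)) u with hzdef
        have e2 : ‖(⟪u, applyWord X (βt.map Fin.castSucc) z⟫ : ℂ)‖
            = ‖(⟪z, applyWord X (βt.reverse.map Fin.castSucc) u⟫ : ℂ)‖ := by
          rw [norm_inner_symm, abs_inner_word X D hXD hherm _ z hzD u hu,
            List.map_reverse]
        have e3 : ‖(⟪z, applyWord X (βt.reverse.map Fin.castSucc) u⟫ : ℂ)‖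
            ≤ ‖z‖ * ‖applyWord X (βt.reverse.map Fin.castSucc) u‖ :=
          norm_inner_le_norm _ _
        have e4 : ‖z‖ ≤ CC * AA ^ aT * m aT := hwordY aT
        have e5 : ‖applyWord X (βt.reverse.map Fin.castSucc) u‖
            ≤ CC * AA ^ βt.length * m βt.length := by
          have := hwordX' βt.reverse
          rwa [List.length_reverse] at this
        have e6 : m aT * m βt.length ≤ m (βt.length + aT) := by
          have := m_superadd m hmpos hA0 hA1 aT βt.length
          rwa [Nat.add_comm] at this
        have e7 : AA ^ aT * AA ^ βt.length ≤ AA ^ (k + k) := by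
          rw [← pow_add]
          exact pow_le_pow_right₀ hAA1 (by omega)
        have hz0 : (0:ℝ) ≤ ‖z‖ := norm_nonneg _
        have hw0 : (0:ℝ) ≤ ‖applyWord X (βt.reverse.map Fin.castSucc) u‖ := norm_nonneg _
        have hct : (0:ℝ) ≤ ‖ct‖ := norm_nonneg _
        have step : ‖z‖ * ‖applyWord X (βt.reverse.map Fin.castSucc) u‖
            ≤ CC ^ 2 * AA ^ (k + k) * m (βt.length + aT) := by
          have s1 : ‖z‖ * ‖applyWord X (βt.reverse.map Fin.castSucc) u‖
              ≤ (CC * AA ^ aT * m aT) * (CC * AA ^ βt.length * m βt.length) := by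
            apply mul_le_mul e4 e5 hw0
            exact mul_nonneg (mul_nonneg hCC0.le (pow_nonneg hAA0.le _)) (hmpos _).le
          refine s1.trans ?_
          have s2 : (CC * AA ^ aT * m aT) * (CC * AA ^ βt.length * m βt.length)
              = CC ^ 2 * (AA ^ aT * AA ^ βt.length) * (m aT * m βt.length) := by ring
          rw [s2]
          have hma : (0:ℝ) ≤ m aT * m βt.length :=
            mul_nonneg (hmpos _).le (hmpos _).le
          have hAk : (0:ℝ) ≤ AA ^ aT * AA ^ βt.length := by positivity
          have t1 : CC ^ 2 * (AA ^ aT * AA ^ βt.length) * (m aT * m βt.length)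
              ≤ CC ^ 2 * AA ^ (k + k) * (m aT * m βt.length) := by
            apply mul_le_mul_of_nonneg_right _ hma
            nlinarith [e7, sq_nonneg CC, hCC0.le]
          refine t1.trans ?_
          apply mul_le_mul_of_nonneg_left e6
          positivity
        calc ‖ct‖ * ‖(⟪u, applyWord X (βt.map Fin.castSucc) z⟫ : ℂ)‖
            ≤ ‖ct‖ * (CC ^ 2 * AA ^ (k + k) * m (βt.length + aT)) := by
              apply mul_le_mul_of_nonneg_left _ hct
              rw [e2]
              exact e3.trans step
          _ = CC ^ 2 * AA ^ (k + k) * (‖ct‖ * m (βt.length + aT)) := by ring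
      -- sum the bounds
      have hsum1 : ‖(⟪u, applyWord X v u⟫ : ℂ)‖
          ≤ (CC ^ 2 * AA ^ (k + k)) * ((gsrNF c v).map (fun t => ‖t.1‖ * m (gsrLen t))).sum := by
        rw [hNF]
        refine (norm_inner_list_sum_le u (gsrEval X u) (gsrNF c v)).trans ?_
        refine (list_sum_le_sum (gsrNF c v) _ _ hterm).trans ?_
        rw [List.sum_map_mul_left]
      have hsum2 : ((gsrNF c v).map (fun t => ‖t.1‖ * m (gsrLen t))).sum
          ≤ Econ ^ (k + k) * m (k + k) := by
        have hNfact : (0:ℝ) < ((v.length).factorial : ℝ) := by positivity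
        have hterm2 : ∀ t ∈ gsrNF c v, ‖t.1‖ * m (gsrLen t)
            ≤ (m v.length / ((v.length).factorial : ℝ)) *
              (‖t.1‖ * L ^ (v.length - gsrLen t) * ((gsrLen t).factorial : ℝ)) := by
          intro t ht
          have h4 := m_A3_chain m hmpos L hL1 hA3 v.length (gsrLen t) (gsrNF_len c v t ht)
          have hct : (0:ℝ) ≤ ‖t.1‖ := norm_nonneg _
          rw [div_mul_eq_mul_div, le_div_iff₀ hNfact]
          calc ‖t.1‖ * m (gsrLen t) * ((v.length).factorial : ℝ)
              = ‖t.1‖ * (m (gsrLen t) * ((v.length).factorial : ℝ)) := by ring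
            _ ≤ ‖t.1‖ * (L ^ (v.length - gsrLen t) * (((gsrLen t)).factorial : ℝ) * m v.length) :=
                mul_le_mul_of_nonneg_left h4 hct
            _ = m v.length * (‖t.1‖ * L ^ (v.length - gsrLen t) * ((gsrLen t).factorial : ℝ)) := by
                ring
        refine (list_sum_le_sum (gsrNF c v) _ _ hterm2).trans ?_
        rw [List.sum_map_mul_left]
        have hmass := gsrNF_mass c Cc L hCc hL1 hB hLst v
        have hmv : (0:ℝ) ≤ m v.length / ((v.length).factorial : ℝ) := by
          have := (hmpos v.length).le
          positivity
        calc (m v.length / ((v.length).factorial : ℝ)) *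
              ((gsrNF c v).map (fun t => ‖t.1‖ * L ^ (v.length - gsrLen t)
                * ((gsrLen t).factorial : ℝ))).sum
            ≤ (m v.length / ((v.length).factorial : ℝ)) *
              ((Ex + 1) ^ v.length * ((v.length).factorial : ℝ)) :=
              mul_le_mul_of_nonneg_left hmass hmv
          _ = (Ex + 1) ^ v.length * m v.length := by
              field_simp
          _ = Econ ^ (k + k) * m (k + k) := by rw [hEcondef, hvlen]
      have hm2k : m (k + k) ≤ H1 ^ (k + k) * (m k) ^ 2 := by
        have := hA2c1 k k
        nlinarith [this]
      have hk0 : (0:ℝ) < m k := hmpos k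
      have hRHS0 : (0:ℝ) ≤ CC * (AA * Econ * H1) ^ k * m k := by positivity
      have hsqfin : ‖applyWord X α u‖ ^ 2 ≤ (CC * (AA * Econ * H1) ^ k * m k) ^ 2 := by
        rw [hsq]
        have c1 : ‖(⟪u, applyWord X v u⟫ : ℂ)‖
            ≤ (CC ^ 2 * AA ^ (k + k)) * (Econ ^ (k + k) * m (k + k)) := by
          refine hsum1.trans ?_
          apply mul_le_mul_of_nonneg_left hsum2
          positivity
        refine c1.trans ?_
        have expand : (CC * (AA * Econ * H1) ^ k * m k) ^ 2
            = CC ^ 2 * AA ^ (k + k) * (Econ ^ (k + k) * (H1 ^ (k + k) * (m k) ^ 2)) := by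
          have h2k : ((AA * Econ * H1) ^ k) ^ 2 = (AA * Econ * H1) ^ (k + k) := by
            rw [← pow_mul]
            congr 1
            omega
          calc (CC * (AA * Econ * H1) ^ k * m k) ^ 2
              = CC ^ 2 * ((AA * Econ * H1) ^ k) ^ 2 * (m k) ^ 2 := by ring
            _ = CC ^ 2 * (AA * Econ * H1) ^ (k + k) * (m k) ^ 2 := by rw [h2k]
            _ = CC ^ 2 * AA ^ (k + k) * (Econ ^ (k + k) * (H1 ^ (k + k) * (m k) ^ 2)) := by
                rw [mul_pow, mul_pow]
                ring
        rw [expand]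
        have hEcon0 : (0:ℝ) ≤ Econ ^ (k + k) := by positivity
        have hfac : (0:ℝ) ≤ CC ^ 2 * AA ^ (k + k) * Econ ^ (k + k) := by positivity
        calc CC ^ 2 * AA ^ (k + k) * (Econ ^ (k + k) * m (k + k))
            = (CC ^ 2 * AA ^ (k + k) * Econ ^ (k + k)) * m (k + k) := by ring
          _ ≤ (CC ^ 2 * AA ^ (k + k) * Econ ^ (k + k)) * (H1 ^ (k + k) * (m k) ^ 2) :=
              mul_le_mul_of_nonneg_left hm2k hfac
          _ = CC ^ 2 * AA ^ (k + k) * (Econ ^ (k + k) * (H1 ^ (k + k) * (m k) ^ 2)) := by ring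
      calc ‖applyWord X α u‖ = Real.sqrt (‖applyWord X α u‖ ^ 2) := by
            rw [Real.sqrt_sq (norm_nonneg _)]
        _ ≤ Real.sqrt ((CC * (AA * Econ * H1) ^ k * m k) ^ 2) := Real.sqrt_le_sqrt hsqfin
        _ = CC * (AA * Econ * H1) ^ k * m k := Real.sqrt_sq hRHS0
    -- conclude
    refine ⟨CC, AA * Econ * H1 * H1 ^ (n + 1), hCC0, by positivity, ?_⟩
    intro α hα
    have hk := key α
    have hm5 := m_sum_le m hmpos hA0 H1 hH1 hA2c1 (Finset.univ : Finset (Fin (n + 1)))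
      (fun j => α.count j)
    rw [sum_count_eq_length] at hm5
    have hcard : (Finset.univ : Finset (Fin (n + 1))).card = n + 1 := by simp
    rw [hcard] at hm5
    have hprod0 : (0:ℝ) ≤ ∏ j : Fin (n + 1), m (α.count j) :=
      Finset.prod_nonneg fun j _ => (hmpos _).le
    have hfac0 : (0:ℝ) ≤ CC * (AA * Econ * H1) ^ α.length := by positivity
    calc ‖applyWord X α u‖ ≤ CC * (AA * Econ * H1) ^ α.length * m α.length := hk
      _ ≤ CC * (AA * Econ * H1) ^ α.length *
          (H1 ^ ((n + 1) * α.length) * ∏ j : Fin (n + 1), m (α.count j)) :=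
          mul_le_mul_of_nonneg_left hm5 hfac0
      _ = CC * (AA * Econ * H1 * H1 ^ (n + 1)) ^ α.length * ∏ j : Fin (n + 1), m (α.count j) := by
          have e1 : (AA * Econ * H1 * H1 ^ (n + 1)) ^ α.length
              = (AA * Econ * H1) ^ α.length * (H1 ^ (n + 1)) ^ α.length := mul_pow _ _ _
          have e2 : (H1 ^ (n + 1)) ^ α.length = H1 ^ ((n + 1) * α.length) :=
            (pow_mul H1 (n + 1) α.length).symm
          rw [e1, e2]
          ring
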